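/- arXiv:2301.04378 — 2 statements merged into one kernel-verified Lean document; each statement's English description precedes it below -/
import Mathlib

section
/- Let X_1, ..., X_{n+1} be exchangeable real-valued random variables and let Q be the empirical (1-δ)-quantile of the multiset {X_1, ..., X_{n+1}} (i.e., the ⌈(1-δ)(n+1)⌉-th smallest value). Then P(X_{n+1} ≤ Q) ≥ 1 - δ. -/
/-!
For a fixed realisation, at least `k` of the `n + 1` values lie at or below their own `k`-th
order statistic, so the events `Gⱼ = {Xⱼ ≤ X₍ₖ₎}` satisfy `k ≤ ∑ⱼ P(Gⱼ)`. Since the order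
statistic is a symmetric function of the sample, exchangeability makes all `P(Gⱼ)` equal, hence
`P(G_{n+1}) ≥ k / (n + 1) ≥ 1 - δ` for `k = ⌈(1 - δ)(n + 1)⌉`.
-/

open MeasureTheory

/-- The `k`-th smallest element (1-indexed) of the multiset of values of `a`;
returns `d` if `k` is out of range. -/
def orderStat {α : Type*} [LinearOrder α] (d : α) {m : ℕ} (a : Fin m → α) (k : ℕ) : α :=
  (Multiset.sort (↑(List.ofFn a) : Multiset α) (· ≤ ·)).getD (k - 1) d

/-- A finite family of random elements is exchangeable if the joint law is invariant
under every permutation of the indices. -/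
def Exchangeable {Ω α : Type*} [MeasurableSpace Ω] [MeasurableSpace α]
    (P : Measure Ω) {m : ℕ} (X : Fin m → Ω → α) : Prop :=
  ∀ π : Equiv.Perm (Fin m),
    Measure.map (fun ω => fun i => X (π i) ω) P = Measure.map (fun ω => fun i => X i ω) P

open Finset
open scoped ENNReal

theorem List.Pairwise.pred_getElem_iff_lt_countP {α : Type*} [Preorder α] {p : α → Prop}
    [DecidablePred p] (hp : Antitone p) {s : List α} (hs : s.Pairwise (· ≤ ·)) {j : ℕ}
    (hj : j < s.length) : p s[j] ↔ j < s.countP (p ·) := by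
  induction s generalizing j with
  | nil => simp at hj
  | cons a t ih =>
    rw [List.pairwise_cons] at hs
    by_cases ha : p a
    · cases j with
      | zero => simp [ha]
      | succ j => simp [ha, ih hs.2 (Nat.lt_of_succ_lt_succ hj)]
    · have hge : ∀ b ∈ a :: t, a ≤ b := by simpa using hs.1
      have hnone : (a :: t).countP (p ·) = 0 :=
        List.countP_eq_zero.2 fun b hb hpb => ha (hp (hge b hb) (by simpa using hpb))
      simpa [hnone] using fun hpj => ha (hp (hge _ (List.getElem_mem hj)) hpj)

theorem countP_ofFn_eq_card_filter {α : Type*} {m : ℕ} (x : Fin m → α) (p : α → Prop)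
    [DecidablePred p] : (List.ofFn x).countP (p ·) = #{i | p (x i)} := by
  rw [← Multiset.coe_countP, ← Fin.univ_val_map, Multiset.countP_map]
  rfl

section OrderStat

variable {α : Type*} [LinearOrder α] {m : ℕ}

theorem pred_orderStat_iff_le_card {p : α → Prop} [DecidablePred p] (hp : Antitone p) (d : α)
    (x : Fin m → α) {k : ℕ} (hk₁ : 1 ≤ k) (hk₂ : k ≤ m) :
    p (orderStat d x k) ↔ k ≤ #{i | p (x i)} := by
  set s := Multiset.sort (↑(List.ofFn x) : Multiset α) (· ≤ ·)
  have hk : k - 1 < s.length := by simp [s]; omega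
  have hcount : s.countP (p ·) = #{i | p (x i)} := by
    rw [← countP_ofFn_eq_card_filter, ← Multiset.coe_countP, ← Multiset.coe_countP,
      Multiset.sort_eq]
  rw [orderStat, List.getD_eq_getElem _ _ hk,
    (Multiset.pairwise_sort _ _).pred_getElem_iff_lt_countP hp hk, hcount]
  omega

theorem le_orderStat_iff (d : α) (x : Fin m → α) (v : α) {k : ℕ} (hk₁ : 1 ≤ k) (hk₂ : k ≤ m) :
    v ≤ orderStat d x k ↔ #{i | x i < v} < k := by
  rw [← not_lt, pred_orderStat_iff_le_card (fun _ _ hab hb => hab.trans_lt hb) d x hk₁ hk₂,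
    not_le]

theorem le_card_le_orderStat (d : α) (x : Fin m → α) {k : ℕ} (hk₁ : 1 ≤ k) (hk₂ : k ≤ m) :
    k ≤ #{i | x i ≤ orderStat d x k} :=
  (pred_orderStat_iff_le_card (p := (· ≤ orderStat d x k)) (fun _ _ hab hb => hab.trans hb)
    d x hk₁ hk₂).1 le_rfl

theorem orderStat_comp_perm (d : α) (x : Fin m → α) (σ : Equiv.Perm (Fin m)) (k : ℕ) :
    orderStat d (x ∘ σ) k = orderStat d x k := by
  simp only [orderStat, Multiset.coe_eq_coe.2 (σ.ofFn_comp_perm x)]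

end OrderStat

open Classical in
theorem le_sum_measure_of_le_card_mem {Ω ι : Type*} [MeasurableSpace Ω] (μ : Measure Ω)
    (s : Finset ι) {B : ι → Set Ω} (hB : ∀ j ∈ s, MeasurableSet (B j)) {k : ℕ}
    (hk : ∀ ω, k ≤ #{j ∈ s | ω ∈ B j}) :
    k * μ Set.univ ≤ ∑ j ∈ s, μ (B j) :=
  calc k * μ Set.univ = ∫⁻ _, (k : ℝ≥0∞) ∂μ := (lintegral_const _).symm
    _ ≤ ∫⁻ ω, ∑ j ∈ s, (B j).indicator 1 ω ∂μ := lintegral_mono fun ω => by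
      simpa [Set.indicator_apply] using hk ω
    _ = ∑ j ∈ s, μ (B j) := by
      rw [lintegral_finsetSum _ fun j hj => measurable_one.indicator (hB j hj)]
      exact Finset.sum_congr rfl fun j hj => lintegral_indicator_one (hB j hj)

theorem Exchangeable.measure_preimage_perm {Ω α : Type*} [MeasurableSpace Ω] [MeasurableSpace α]
    {P : Measure Ω} {m : ℕ} {X : Fin m → Ω → α} (hX : Exchangeable P X)
    (hmeas : ∀ i, Measurable (X i)) (σ : Equiv.Perm (Fin m)) {S : Set (Fin m → α)} (hS : MeasurableSet S) :
    P ((fun ω i => X (σ i) ω) ⁻¹' S) = P ((fun ω i => X i ω) ⁻¹' S) := by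
  rw [← Measure.map_apply (measurable_pi_lambda _ fun i => hmeas (σ i)) hS,
    ← Measure.map_apply (measurable_pi_lambda _ hmeas) hS, hX σ]

section Measurable

variable {α : Type*} [LinearOrder α] [TopologicalSpace α] [OrderClosedTopology α]
  [SecondCountableTopology α] [MeasurableSpace α] [OpensMeasurableSpace α] {m : ℕ}

theorem measurableSet_le_orderStat (d : α) (j : Fin m) {k : ℕ} (hk₁ : 1 ≤ k) (hk₂ : k ≤ m) :
    MeasurableSet {x : Fin m → α | x j ≤ orderStat d x k} := by
  have hrank : Measurable fun x : Fin m → α => #{i | x i < x j} := by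
    simp only [Finset.card_filter]
    exact Finset.measurable_sum _ fun i _ => Measurable.ite
      (measurableSet_lt (measurable_pi_apply i) (measurable_pi_apply j))
      measurable_const measurable_const
  have hset : {x : Fin m → α | x j ≤ orderStat d x k} =
      (fun x => #{i | x i < x j}) ⁻¹' Set.Iio k :=
    Set.ext fun x => le_orderStat_iff d x (x j) hk₁ hk₂
  exact hset ▸ hrank measurableSet_Iio

variable {Ω : Type*} [MeasurableSpace Ω] {P : Measure Ω} {X : Fin m → Ω → α}

theorem Exchangeable.measure_le_orderStat_eq (hX : Exchangeable P X)
    (hmeas : ∀ i, Measurable (X i)) (d : α) {k : ℕ} (hk₁ : 1 ≤ k) (hk₂ : k ≤ m) (j j' : Fin m) :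
    P {ω | X j ω ≤ orderStat d (fun i => X i ω) k} =
      P {ω | X j' ω ≤ orderStat d (fun i => X i ω) k} := by
  have h := hX.measure_preimage_perm hmeas (Equiv.swap j' j) (measurableSet_le_orderStat d j hk₁ hk₂)
  have hσ : ∀ ω, orderStat d (fun i => X (Equiv.swap j' j i) ω) k =
      orderStat d (fun i => X i ω) k :=
    fun ω => orderStat_comp_perm d (fun i => X i ω) _ k
  simp only [Set.preimage_ofPred_eq, Equiv.swap_apply_right, hσ] at h
  exact h.symm

theorem Exchangeable.natCast_le_mul_measure_le_orderStat [IsProbabilityMeasure P]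
    (hX : Exchangeable P X) (hmeas : ∀ i, Measurable (X i)) (d : α) {k : ℕ} (hk₁ : 1 ≤ k)
    (hk₂ : k ≤ m) (j : Fin m) :
    (k : ℝ≥0∞) ≤ m * P {ω | X j ω ≤ orderStat d (fun i => X i ω) k} := by
  have hsum := le_sum_measure_of_le_card_mem P univ
    (B := fun j => {ω | X j ω ≤ orderStat d (fun i => X i ω) k})
    (fun j _ => measurable_pi_lambda _ hmeas (measurableSet_le_orderStat d j hk₁ hk₂))
    (fun ω => by simpa using le_card_le_orderStat d (fun i => X i ω) hk₁ hk₂)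
  rwa [measure_univ, mul_one, Finset.sum_congr rfl fun j' _ =>
    hX.measure_le_orderStat_eq hmeas d hk₁ hk₂ j' j, sum_const, card_univ, Fintype.card_fin,
    nsmul_eq_mul] at hsum

end Measurable

/-- exchangeable quantile lemma. -/
theorem stmt0 {Ω : Type*} [MeasurableSpace Ω] (P : Measure Ω) [IsProbabilityMeasure P]
    (n : ℕ) (X : Fin (n + 1) → Ω → ℝ) (hmeas : ∀ i, Measurable (X i))
    (hexch : Exchangeable P X) (δ : ℝ) (hδ : δ ∈ Set.Ioo (0 : ℝ) 1) :
    ENNReal.ofReal (1 - δ) ≤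
      P {ω | X (Fin.last n) ω ≤ orderStat 0 (fun i => X i ω) ⌈(1 - δ) * (n + 1 : ℝ)⌉₊} := by
  obtain ⟨hδ₀, hδ₁⟩ := hδ
  set k := ⌈(1 - δ) * (n + 1 : ℝ)⌉₊
  have hk₁ : 1 ≤ k := Nat.one_le_ceil_iff.2 (by nlinarith)
  have hk₂ : k ≤ n + 1 := Nat.ceil_le.2 (by push_cast; nlinarith)
  have hbound := hexch.natCast_le_mul_measure_le_orderStat hmeas 0 hk₁ hk₂ (Fin.last n)
  refine (ENNReal.mul_le_mul_iff_right (by simp) (by simp)).1 (le_trans ?_ hbound)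
  calc ((n + 1 : ℕ) : ℝ≥0∞) * ENNReal.ofReal (1 - δ)
      = ENNReal.ofReal ((1 - δ) * (n + 1 : ℝ)) := by
        rw [mul_comm, ENNReal.ofReal_mul (by linarith)]; norm_cast
    _ ≤ k := by rw [← ENNReal.ofReal_natCast]; exact ENNReal.ofReal_le_ofReal (Nat.le_ceil _)
end

section
/- (Exchangeable coordinate bound.) If W_1, ..., W_{n+1} are exchangeable real random variables and E is a permutation-symmetric measurable event determined by (W_1,...,W_{n+1}) such that on E at most k of the W_i exceed a (random, permutation-symmetric) threshold T = T(W_1,...,W_{n+1}), then P({W_{n+1} > T} ∩ E) ≤ k/(n+1). -/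
open MeasureTheory

/-!
Let `μ` be the joint law of `(W_1, …, W_{n+1})` and `A j` the event that `W` lies in `E` and its
`j`-th coordinate exceeds `T(W)`. Since `T` and `E` are symmetric, the transposition of `j` and
`n + 1` maps `A (n+1)` onto `A j`, so exchangeability gives all `A j` the same probability.
A point lies in at most `k` of the `A j`, hence `(n + 1) μ (A (n+1)) = ∑ j, μ (A j) ≤ k`.
-/

open Finset

theorem Exchangeable.measurePreserving_perm {Ω α : Type*} [MeasurableSpace Ω]
    [MeasurableSpace α] {P : Measure Ω} {m : ℕ} {X : Fin m → Ω → α} (hX : Exchangeable P X)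
    (hmeas : ∀ i, Measurable (X i)) (π : Equiv.Perm (Fin m)) :
    MeasurePreserving (fun w i => w (π i)) (P.map fun ω i => X i ω)
      (P.map fun ω i => X i ω) := by
  refine ⟨by fun_prop, ?_⟩
  rw [Measure.map_map (by fun_prop) (measurable_pi_lambda _ hmeas)]
  exact hX π

theorem sum_measure_le_mul_measure_univ_of_card_le {ι α : Type*} [MeasurableSpace α]
    (μ : Measure α) (s : Finset ι) {t : ι → Set α} [∀ x, DecidablePred (x ∈ t ·)]
    (ht : ∀ i ∈ s, MeasurableSet (t i)) {k : ℕ} (hk : ∀ x, #{i ∈ s | x ∈ t i} ≤ k) :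
    ∑ i ∈ s, μ (t i) ≤ k * μ Set.univ := by
  have hcount : ∀ x, ∑ i ∈ s, (t i).indicator 1 x ≤ (k : ENNReal) := fun x => by
    simp only [Set.indicator_apply, Pi.one_apply, sum_boole]
    exact_mod_cast hk x
  calc ∑ i ∈ s, μ (t i) = ∫⁻ x, ∑ i ∈ s, (t i).indicator 1 x ∂μ := by
        rw [lintegral_finsetSum _ fun i hi => measurable_one.indicator (ht i hi)]
        exact sum_congr rfl fun i hi => (lintegral_indicator_one (ht i hi)).symm
    _ ≤ ∫⁻ _, (k : ENNReal) ∂μ := lintegral_mono hcount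
    _ = k * μ Set.univ := lintegral_const _

section PermInvariant

variable {ι α : Type*} [MeasurableSpace α] {μ : Measure (ι → α)} {A : ι → Set (ι → α)}

theorem measure_eq_of_perm_equivariant [DecidableEq ι]
    (hμ : ∀ π : Equiv.Perm ι, MeasurePreserving (fun w i => w (π i)) μ μ)
    (hA : ∀ j, MeasurableSet (A j))
    (hAeq : ∀ (π : Equiv.Perm ι) w j, (fun i => w (π i)) ∈ A j ↔ w ∈ A (π j)) (i j : ι) :
    μ (A i) = μ (A j) := by
  have hpre : (fun w l => w (Equiv.swap i j l)) ⁻¹' A j = A i := by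
    ext w
    simp [hAeq]
  rw [← hpre]
  exact (hμ _).measure_preimage (hA j).nullMeasurableSet

theorem measure_le_div_card_of_perm_equivariant [Fintype ι] [DecidableEq ι]
    [IsProbabilityMeasure μ]
    (hμ : ∀ π : Equiv.Perm ι, MeasurePreserving (fun w i => w (π i)) μ μ)
    (hA : ∀ j, MeasurableSet (A j))
    (hAeq : ∀ (π : Equiv.Perm ι) w j, (fun i => w (π i)) ∈ A j ↔ w ∈ A (π j))
    [∀ w, DecidablePred (w ∈ A ·)] {k : ℕ}
    (hk : ∀ w, #{j | w ∈ A j} ≤ k) (j : ι) :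
    μ (A j) ≤ k / Fintype.card ι := by
  have hsum : Fintype.card ι * μ (A j) = ∑ i, μ (A i) := by
    simp [measure_eq_of_perm_equivariant hμ hA hAeq _ j]
  have hle : ∑ i, μ (A i) ≤ k := by
    simpa using sum_measure_le_mul_measure_univ_of_card_le μ univ (fun i _ => hA i) hk
  rw [ENNReal.le_div_iff_mul_le (Or.inl (by simpa using (Fintype.card_pos_iff.2 ⟨j⟩).ne'))
    (Or.inl (by simp)), mul_comm, hsum]
  exact hle

end PermInvariant

/-- exchangeable coordinate bound with a symmetric threshold and event. -/
theorem stmt19 {Ω : Type*} [MeasurableSpace Ω] (P : Measure Ω) [IsProbabilityMeasure P]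
    (n : ℕ) (W : Fin (n + 1) → Ω → ℝ) (hmeas : ∀ i, Measurable (W i))
    (hexch : Exchangeable P W)
    (T : (Fin (n + 1) → ℝ) → ℝ) (hT : Measurable T)
    (hTsym : ∀ (π : Equiv.Perm (Fin (n + 1))) (w : Fin (n + 1) → ℝ),
      T (fun i => w (π i)) = T w)
    (E : Set (Fin (n + 1) → ℝ)) (hE : MeasurableSet E)
    (hEsym : ∀ (π : Equiv.Perm (Fin (n + 1))) (w : Fin (n + 1) → ℝ),
      w ∈ E ↔ (fun i => w (π i)) ∈ E)
    (k : ℕ)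
    (hcount : ∀ w ∈ E, (Finset.univ.filter (fun i : Fin (n + 1) => T w < w i)).card ≤ k) :
    P {ω | (fun i => W i ω) ∈ E ∧ T (fun i => W i ω) < W (Fin.last n) ω} ≤
      ENNReal.ofReal ((k : ℝ) / (n + 1)) := by
  classical
  set A : Fin (n + 1) → Set (Fin (n + 1) → ℝ) := fun j => {w | w ∈ E ∧ T w < w j}
  have hA : ∀ j, MeasurableSet (A j) := fun j => hE.inter (measurableSet_lt hT (by fun_prop))
  have hAeq : ∀ (π : Equiv.Perm (Fin (n + 1))) w j, (fun i => w (π i)) ∈ A j ↔ w ∈ A (π j) :=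
    fun π w j => by simp only [A, Set.mem_ofPred_eq, ← hEsym, hTsym]
  have hk : ∀ w, #{j | w ∈ A j} ≤ k := fun w => by
    by_cases hw : w ∈ E
    · simpa [A, hw] using hcount w hw
    · simp [A, hw]
  have hlaw : P {ω | (fun i => W i ω) ∈ E ∧ T (fun i => W i ω) < W (Fin.last n) ω}
      = P.map (fun ω i => W i ω) (A (Fin.last n)) :=
    (Measure.map_apply (measurable_pi_lambda _ hmeas) (hA _)).symm
  have : IsProbabilityMeasure (P.map fun ω i => W i ω) :=
    Measure.isProbabilityMeasure_map (measurable_pi_lambda _ hmeas).aemeasurable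
  rw [hlaw, ENNReal.ofReal_div_of_pos (by positivity),
    ENNReal.ofReal_add (by positivity) zero_le_one]
  simpa using measure_le_div_card_of_perm_equivariant (hexch.measurePreserving_perm hmeas)
    hA hAeq hk (Fin.last n)
end
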